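/- arXiv:2202.09091 — 3 statements merged into one kernel-verified Lean document; each statement's English description precedes it below -/
import Mathlib

section
/- Let u, x, y be nonempty words with |x| = |y| ≤ |u|/2 and x ≠ y. Then at least one of ux and uy is primitive. -/
variable {A : Type*}

/-- k-fold concatenation of a word with itself. -/
def pw (w : List A) : ℕ → List A
  | 0 => []
  | n + 1 => w ++ pw w n

/-- A nonempty word is primitive if it is not a proper power. -/
def Primitive (w : List A) : Prop :=
  w ≠ [] ∧ ∀ (v : List A) (m : ℕ), w = pw v m → m = 1

lemma pw_zero (w : List A) : pw w 0 = [] := rfl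

lemma pw_succ (w : List A) (n : ℕ) : pw w (n + 1) = w ++ pw w n := rfl

lemma pw_nil (m : ℕ) : pw ([] : List A) m = [] := by
  induction m with
  | zero => rfl
  | succ m ih => rw [pw_succ, ih]; rfl

lemma pw_length (w : List A) (n : ℕ) : (pw w n).length = n * w.length := by
  induction n with
  | zero => simp [pw_zero]
  | succ n ih => rw [pw_succ, List.length_append, ih, Nat.succ_mul]; ring

lemma pw_add (w : List A) (a b : ℕ) : pw w (a + b) = pw w a ++ pw w b := by
  induction a with
  | zero => simp [pw_zero]
  | succ a ih => rw [Nat.succ_add, pw_succ, pw_succ, ih, List.append_assoc]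

lemma pw_mul (w : List A) (a b : ℕ) : pw w (a * b) = pw (pw w a) b := by
  induction b with
  | zero => rfl
  | succ b ih =>
    rw [show a * (b + 1) = a + a * b by ring, pw_add, ih, pw_succ]

lemma pw_getElem? (w : List A) (n i : ℕ) (h : i < n * w.length) :
    (pw w n)[i]? = w[i % w.length]? := by
  induction n generalizing i with
  | zero => omega
  | succ n ih =>
    rw [pw_succ, List.getElem?_append]
    by_cases hi : i < w.length
    · rw [if_pos hi, Nat.mod_eq_of_lt hi]
    · rw [if_neg hi, ih (i - w.length) (by rw [Nat.succ_mul] at h; omega),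
        ← Nat.mod_eq_sub_mod (show i ≥ w.length by omega)]

/-- `d` is a period of `w`. -/
def Per (w : List A) (d : ℕ) : Prop :=
  ∀ i, i + d < w.length → w[i]? = w[i + d]?

lemma per_of_prefix {w v : List A} {d : ℕ} (hp : Per w d) (h : v <+: w) : Per v d := by
  obtain ⟨t, rfl⟩ := h
  intro i hi
  have h1 : i < v.length := by omega
  have h2 : i + d < v.length := hi
  rw [show v[i]? = (v ++ t)[i]? by rw [List.getElem?_append, if_pos h1],
    show v[i+d]? = (v ++ t)[i+d]? by rw [List.getElem?_append, if_pos h2]]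
  exact hp i (by rw [List.length_append]; omega)

lemma per_mod {w : List A} {d : ℕ} (hp : Per w d) (hd : 0 < d) :
    ∀ i, i < w.length → w[i]? = w[i % d]? := by
  intro i
  induction i using Nat.strong_induction_on with
  | _ i ih =>
    intro hi
    by_cases h : i < d
    · rw [Nat.mod_eq_of_lt h]
    · have e1 : i - d + d = i := by omega
      have h1 := hp (i - d) (by omega)
      rw [e1] at h1
      have h2 := ih (i - d) (by omega) (by omega)
      have e3 : i % d = (i - d) % d := Nat.mod_eq_sub_mod (show i ≥ d by omega)
      rw [← h1, h2, e3]

lemma per_sub {w : List A} {a b : ℕ} (ha : Per w a) (hb : Per w b) (hab : a ≤ b)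
    (hlen : a + b ≤ w.length) : Per w (b - a) := by
  intro i hi
  rcases le_or_gt a i with h | h
  · have h1 := ha (i - a) (by omega)
    have h2 := hb (i - a) (by omega)
    have e1 : i - a + a = i := by omega
    have e2 : i - a + b = i + (b - a) := by omega
    rw [e1] at h1
    rw [e2] at h2
    rw [← h1, h2]
  · have h1 := hb i (by omega)
    have h2 := ha (i + (b - a)) (by omega)
    have e2 : i + (b - a) + a = i + b := by omega
    rw [e2] at h2
    rw [h1, h2]

lemma fine_wilf_aux (w : List A) :
    ∀ s a b, a + b ≤ s → Per w a → Per w b → a + b ≤ w.length → Per w (Nat.gcd a b) := by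
  intro s
  induction s with
  | zero =>
    intro a b hs ha hb _
    have h0 : a = 0 ∧ b = 0 := by omega
    obtain ⟨rfl, rfl⟩ := h0
    simpa using ha
  | succ s ih =>
    intro a b hs ha hb hlen
    rcases Nat.eq_zero_or_pos a with rfl | hapos
    · simpa using hb
    rcases Nat.eq_zero_or_pos b with rfl | hbpos
    · simpa using ha
    rcases le_or_gt a b with hab | hba
    · have hsub : Per w (b - a) := per_sub ha hb hab hlen
      have := ih a (b - a) (by omega) ha hsub (by omega)
      rwa [Nat.gcd_sub_self_right hab] at this
    · have hsub : Per w (a - b) := per_sub hb ha (by omega) (by omega)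
      have := ih b (a - b) (by omega) hb hsub (by omega)
      rwa [Nat.gcd_sub_self_right (by omega : b ≤ a), Nat.gcd_comm] at this

lemma fine_wilf {w : List A} {a b : ℕ} (ha : Per w a) (hb : Per w b)
    (hlen : a + b ≤ w.length) : Per w (Nat.gcd a b) :=
  fine_wilf_aux w (a + b) a b le_rfl ha hb hlen

lemma eq_pw_of_per {w : List A} {d k : ℕ} (hd : 0 < d) (hk : w.length = k * d)
    (hp : Per w d) : w = pw (w.take d) k := by
  rcases Nat.eq_zero_or_pos k with rfl | hkpos
  · have hw : w = [] := List.length_eq_zero_iff.mp (by omega)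
    rw [hw]; rfl
  have hkd : d ≤ k * d := Nat.le_mul_of_pos_left d hkpos
  have hdw : d ≤ w.length := by omega
  have htl : (w.take d).length = d := by
    rw [List.length_take]; omega
  apply List.ext_getElem?
  intro i
  by_cases hi : i < w.length
  · rw [pw_getElem? _ _ _ (by rw [htl]; omega), htl, per_mod hp hd i hi,
      List.getElem?_take, if_pos (Nat.mod_lt i hd)]
  · rw [List.getElem?_eq_none (by omega), List.getElem?_eq_none]
    rw [pw_length, htl]; omega

lemma per_of_eq_pw {w v : List A} {m : ℕ} (h : w = pw v m) : Per w v.length := by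
  intro i hi
  subst h
  rw [pw_length] at hi
  rw [pw_getElem? _ _ _ (by omega), pw_getElem? _ _ _ hi, Nat.add_mod_right]

lemma prim_root_aux :
    ∀ (N : ℕ) (w : List A), w.length ≤ N → w ≠ [] → ¬Primitive w →
      ∃ p k, Primitive p ∧ 2 ≤ k ∧ w = pw p k := by
  intro N
  induction N with
  | zero =>
    intro w hw hne _
    rw [Nat.le_zero, List.length_eq_zero_iff] at hw
    exact absurd hw hne
  | succ N ih =>
    intro w hw hne hnp
    rw [Primitive] at hnp
    push_neg at hnp
    obtain ⟨v, m, hvm, hm⟩ := hnp hne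
    have hm0 : m ≠ 0 := by rintro rfl; exact hne hvm
    have hv : v ≠ [] := by rintro rfl; rw [pw_nil] at hvm; exact hne hvm
    have hvpos : 0 < v.length := List.length_pos_iff.mpr hv
    have hlw : w.length = m * v.length := by rw [hvm, pw_length]
    have h2v : 2 * v.length ≤ m * v.length := Nat.mul_le_mul_right _ (by omega)
    by_cases hpv : Primitive v
    · exact ⟨v, m, hpv, by omega, hvm⟩
    · obtain ⟨p, k, hp, hk, hvk⟩ := ih v (by omega) hv hpv
      have h2km : 2 * 1 ≤ k * m := Nat.mul_le_mul (by omega) (by omega)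
      refine ⟨p, k * m, hp, by omega, ?_⟩
      rw [hvm, hvk, ← pw_mul]

lemma prim_root {w : List A} (hne : w ≠ []) (h : ¬Primitive w) :
    ∃ p k, Primitive p ∧ 2 ≤ k ∧ w = pw p k :=
  prim_root_aux w.length w le_rfl hne h

/-- The case `u ++ x = p²`, `u ++ y = qⁿ` with `n ≥ 3` is impossible. -/
lemma case_two (u x y p q : List A) (n : ℕ)
    (hlen : x.length = y.length) (hhalf : 2 * x.length ≤ u.length)
    (hp : Primitive p) (hq : Primitive q) (h3 : 3 ≤ n)
    (hux : u ++ x = pw p 2) (huy : u ++ y = pw q n) : False := by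
  have ha : u.length + x.length = 2 * p.length := by
    rw [← List.length_append, hux, pw_length]
  have hd : u.length + y.length = n * q.length := by
    rw [← List.length_append, huy, pw_length]
  have hqpos : 0 < q.length := List.length_pos_iff.mpr hq.1
  have hppos : 0 < p.length := List.length_pos_iff.mpr hp.1
  set a := p.length with hadef
  set d := q.length with hddef
  rcases Nat.even_or_odd n with ⟨k, hk⟩ | ⟨k, hk⟩
  · -- n even : p = q^k with k ≥ 2
    have hnd : n * d = 2 * (k * d) := by rw [hk]; ring
    have hk2 : 2 ≤ k := by omega
    have hakd : a = k * d := by omega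
    have hau : a ≤ u.length := by omega
    have hpu : p = u.take a := by
      have h' : (u ++ x).take a = u.take a := List.take_append_of_le_length hau
      rw [hux, pw_succ, List.take_left' rfl] at h'
      exact h'
    have hqu : pw q k = u.take a := by
      have h' : (u ++ y).take a = u.take a := List.take_append_of_le_length hau
      rw [huy, show n = k + (n - k) by omega, pw_add,
        List.take_left' (by rw [pw_length, ← hddef]; omega)] at h'
      exact h'
    have hpqk : p = pw q k := by rw [hpu, hqu]
    exact absurd (hp.2 q k hpqk) (by omega)
  · -- n odd : q = (q.take r)² where d = 2r
    have hnd : n * d = 2 * (k * d) + d := by rw [hk]; ring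
    have hkd : d ≤ k * d := Nat.le_mul_of_pos_left d (by omega)
    have hnd' : n * q.length = 2 * (k * d) + d := by rw [← hddef]; exact hnd
    have hdeven : d % 2 = 0 := by omega
    set r := d / 2 with hrdef
    have hd2r : d = 2 * r := by omega
    have hrpos : 0 < r := by omega
    have hakr : a = k * d + r := by omega
    have hra : 3 * r ≤ a := by omega
    have key : ∀ i, i < r → q[i]? = q[i + r]? := by
      intro i hi
      have c1 : q[i]? = (u ++ y)[i]? := by
        rw [huy, pw_getElem? _ _ _ (by omega), Nat.mod_eq_of_lt (by omega)]
      have c2 : (u ++ y)[i]? = u[i]? := by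
        rw [List.getElem?_append, if_pos (by omega)]
      have c3 : u[i]? = (u ++ x)[i]? := by
        rw [List.getElem?_append, if_pos (by omega)]
      have c4 : (u ++ x)[i]? = p[i]? := by
        rw [hux, pw_getElem? _ _ _ (by omega), Nat.mod_eq_of_lt (by omega)]
      have c5 : p[i]? = (u ++ x)[a + i]? := by
        rw [hux, pw_getElem? _ _ _ (by omega),
          show (a + i) % a = i by rw [Nat.add_mod_left, Nat.mod_eq_of_lt (by omega)]]
      have c6 : (u ++ x)[a + i]? = u[a + i]? := by
        rw [List.getElem?_append, if_pos (by omega)]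
      have c7 : u[a + i]? = (u ++ y)[a + i]? := by
        rw [List.getElem?_append, if_pos (by omega)]
      have c8 : (u ++ y)[a + i]? = q[i + r]? := by
        rw [huy, pw_getElem? _ _ _ (by omega),
          show (a + i) % d = i + r by
            rw [hakr, show k * d + r + i = (r + i) + k * d by ring,
              Nat.add_mul_mod_self_right, Nat.mod_eq_of_lt (by omega),
              Nat.add_comm r i]]
      rw [c1, c2, c3, c4, c5, c6, c7, c8]
    have hper : Per q r := by
      intro i hi
      exact key i (by omega)
    have hq2 : q = pw (q.take r) 2 := eq_pw_of_per hrpos (by omega) hper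
    exact absurd (hq.2 _ 2 hq2) (by omega)

theorem shyr_tu (u x y : List A) (hu : u ≠ []) (hx : x ≠ []) (hy : y ≠ [])
    (hlen : x.length = y.length) (hhalf : 2 * x.length ≤ u.length) (hxy : x ≠ y) :
    Primitive (u ++ x) ∨ Primitive (u ++ y) := by
  by_contra hcon
  push_neg at hcon
  obtain ⟨h1, h2⟩ := hcon
  have huxne : u ++ x ≠ [] := by simp [hu]
  have huyne : u ++ y ≠ [] := by simp [hu]
  obtain ⟨p, m, hp, hm, hpm⟩ := prim_root huxne h1
  obtain ⟨q, n, hq, hn, hqn⟩ := prim_root huyne h2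
  have hppos : 0 < p.length := List.length_pos_iff.mpr hp.1
  have hqpos : 0 < q.length := List.length_pos_iff.mpr hq.1
  have hL1 : u.length + x.length = m * p.length := by
    rw [← List.length_append, hpm, pw_length]
  have hL2 : u.length + y.length = n * q.length := by
    rw [← List.length_append, hqn, pw_length]
  have t1 : 2 * p.length ≤ m * p.length := Nat.mul_le_mul_right _ (by omega)
  have t2 : 2 * q.length ≤ n * q.length := Nat.mul_le_mul_right _ (by omega)
  by_cases hmn : m = n
  · -- p = q, hence x = y
    subst hmn
    have hpq : p.length = q.length := by
      have h5 : m * p.length = m * q.length := by omega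
      exact Nat.eq_of_mul_eq_mul_left (by omega) h5
    have hpu : p = u.take p.length := by
      have h' : (u ++ x).take p.length = u.take p.length :=
        List.take_append_of_le_length (by omega)
      rw [hpm, show m = 1 + (m - 1) by omega, pw_add, pw_succ, pw_zero,
        List.append_nil, List.take_left' rfl] at h'
      exact h'
    have hqu : q = u.take q.length := by
      have h' : (u ++ y).take q.length = u.take q.length :=
        List.take_append_of_le_length (by omega)
      rw [hqn, show m = 1 + (m - 1) by omega, pw_add, pw_succ, pw_zero,
        List.append_nil, List.take_left' rfl] at h'
      exact h'
    have hpqe : p = q := by rw [hpu, hqu, hpq]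
    rw [hpqe, ← hqn] at hpm
    exact hxy (List.append_cancel_left hpm)
  by_cases hm2 : m = 2
  · exact case_two u x y p q n hlen hhalf hp hq (by omega)
      (by rw [hpm, hm2]) hqn
  by_cases hn2 : n = 2
  · exact case_two u y x q p m hlen.symm (by omega) hq hp (by omega)
      (by rw [hqn, hn2]) hpm
  -- m, n ≥ 3, m ≠ n : Fine–Wilf
  have hperp : Per u p.length :=
    per_of_prefix (per_of_eq_pw hpm) ⟨x, rfl⟩
  have hperq : Per u q.length :=
    per_of_prefix (per_of_eq_pw hqn) ⟨y, rfl⟩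
  have hsum : p.length + q.length ≤ u.length := by
    have e1 : 3 * p.length ≤ m * p.length := Nat.mul_le_mul_right _ (by omega)
    have e2 : 3 * q.length ≤ n * q.length := Nat.mul_le_mul_right _ (by omega)
    omega
  set g := Nat.gcd p.length q.length with hgdef
  have hgp : g ∣ p.length := Nat.gcd_dvd_left _ _
  have hgq : g ∣ q.length := Nat.gcd_dvd_right _ _
  have hgpos : 0 < g := Nat.gcd_pos_of_pos_left _ hppos
  have hperg : Per u g := fine_wilf hperp hperq hsum
  have hpu : p = u.take p.length := by
    have h' : (u ++ x).take p.length = u.take p.length :=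
      List.take_append_of_le_length (by omega)
    rw [hpm, show m = 1 + (m - 1) by omega, pw_add, pw_succ, pw_zero,
      List.append_nil, List.take_left' rfl] at h'
    exact h'
  have hqu : q = u.take q.length := by
    have h' : (u ++ y).take q.length = u.take q.length :=
      List.take_append_of_le_length (by omega)
    rw [hqn, show n = 1 + (n - 1) by omega, pw_add, pw_succ, pw_zero,
      List.append_nil, List.take_left' rfl] at h'
    exact h'
  have hperpg : Per p g := per_of_prefix hperg (by rw [hpu]; exact List.take_prefix _ _)
  have hperqg : Per q g := per_of_prefix hperg (by rw [hqu]; exact List.take_prefix _ _)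
  obtain ⟨kp, hkp⟩ := hgp
  obtain ⟨kq, hkq⟩ := hgq
  have e1 : kp = 1 := hp.2 _ kp (eq_pw_of_per hgpos (by rw [hkp]; ring) hperpg)
  have e2 : kq = 1 := hq.2 _ kq (eq_pw_of_per hgpos (by rw [hkq]; ring) hperqg)
  have hpq : p.length = q.length := by rw [hkp, hkq, e1, e2]
  have h5 : m * p.length = n * q.length := by omega
  have h6 : n * q.length = n * p.length := by rw [hpq]
  exact hmn (Nat.eq_of_mul_eq_mul_right hppos (h5.trans h6))
end

section
/- Let p and q be distinct primitive words with |p| = r|q| for some integer r ≥ 2. Then p^m q is primitive for all m ≥ 2. -/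
variable {A : Type*}

/-! If `p^m q = v^k` with `k ≥ 2`, then `p^m` has the periods `|p|` and `|v|`. When
`|p| + |v| ≤ m|p|`, Fine–Wilf and primitivity of `p` give `|p| ∣ |v|`, hence `|p| ∣ |q|`,
impossible since `0 < |q| < |p|`. Otherwise counting lengths forces `m = k = 2` and
`|v| = |p| + |q|/2`, so `p` has the period `|q|/2`, a proper divisor of `|p| = 2r · |q|/2`,
again contradicting primitivity of `p`. -/

open List

section Powers

variable (u : List A)

theorem length_pw : ∀ n, (pw u n).length = n * u.length
  | 0 => by simp [pw]
  | n + 1 => by simp [pw, length_pw n, Nat.succ_mul, Nat.add_comm]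

theorem pw_prefix_pw_succ : ∀ n, pw u n <+: pw u (n + 1)
  | 0 => nil_prefix
  | n + 1 => (prefix_append_right_inj u).mpr (pw_prefix_pw_succ n)

theorem prefix_pw {n : ℕ} (hn : n ≠ 0) : u <+: pw u n := by
  obtain ⟨n, rfl⟩ := Nat.exists_eq_succ_of_ne_zero hn
  exact prefix_append u (pw u n)

theorem take_length_pw {n : ℕ} (hn : n ≠ 0) : (pw u n).take u.length = u :=
  prefix_iff_eq_take.mp (prefix_pw u hn) |>.symm

theorem hasPeriod_pw : ∀ n, HasPeriod (pw u n) u.length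
  | 0 => hasPeriod_empty _
  | n + 1 => by
    rw [HasPeriod, take_length_pw u n.succ_ne_zero]
    exact (prefix_append_right_inj u).mpr (pw_prefix_pw_succ u n)

end Powers

theorem List.HasPeriod.eq_of_take_eq {u w : List A} {g : ℕ} (hg : 0 < g)
    (hu : HasPeriod u g) (hw : HasPeriod w g) (hlen : u.length = w.length)
    (htake : u.take g = w.take g) : u = w := by
  refine ext_getElem? fun i => ?_
  rcases lt_or_ge i u.length with hi | hi
  · have hig : i % g < g := Nat.mod_lt i hg
    rw [← hu.getElem?_mod g i u hi, ← hw.getElem?_mod g i w (hlen ▸ hi),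
      ← getElem?_take_of_lt hig, htake, getElem?_take_of_lt hig]
  · rw [getElem?_eq_none hi, getElem?_eq_none (hlen ▸ hi)]

theorem List.HasPeriod.eq_pw_take {w : List A} {g : ℕ} (hg : 0 < g) (hw : HasPeriod w g)
    (n : ℕ) (hlen : w.length = n * g) : w = pw (w.take g) n := by
  rcases Nat.eq_zero_or_pos n with rfl | hn
  · simpa [pw] using hlen
  have hgw : (w.take g).length = g := length_take_of_le (hlen ▸ Nat.le_mul_of_pos_left g hn)
  have hper := hasPeriod_pw (w.take g) n
  rw [hgw] at hper
  refine hw.eq_of_take_eq hg hper ?_ ?_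
  · rw [length_pw, hgw, hlen]
  · have htake := take_length_pw (w.take g) hn.ne'
    rw [hgw] at htake
    rw [htake]

theorem Primitive.eq_length_of_hasPeriod {p : List A} (hp : Primitive p) {g : ℕ} (hg : 0 < g)
    (hdvd : g ∣ p.length) (hper : HasPeriod p g) : g = p.length := by
  obtain ⟨n, hn⟩ := hdvd
  have hn1 : n = 1 := hp.2 _ n (hper.eq_pw_take hg n (by rw [hn, Nat.mul_comm]))
  rw [hn, hn1, Nat.mul_one]

/-- By Fine–Wilf, `gcd |p| t` is a period of `p`, which primitivity forces to be `|p|`. -/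
theorem Primitive.length_dvd_of_hasPeriod_pw {p : List A} (hp : Primitive p) {m t : ℕ}
    (hper : HasPeriod (pw p m) t) (hlen : p.length + t ≤ m * p.length) : p.length ∣ t := by
  have hp0 : 0 < p.length := length_pos_iff.mpr hp.1
  have hm : m ≠ 0 := by rintro rfl; omega
  have hgcd : HasPeriod (pw p m) (p.length.gcd t) :=
    (hasPeriod_pw p m).gcd hper (by rw [length_pw]; omega)
  have hgcd_p : HasPeriod p (p.length.gcd t) := hgcd.infix (prefix_pw p hm).isInfix
  rw [← hp.eq_length_of_hasPeriod (Nat.gcd_pos_of_pos_left t hp0) (Nat.gcd_dvd_left _ _) hgcd_p]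
  exact Nat.gcd_dvd_right _ _

theorem chu_shyr_yu_ppow_q_general (p q : List A) (hp : Primitive p) (hq : Primitive q)
    (r : ℕ) (hr : 2 ≤ r) (hlen : p.length = r * q.length)
    (m : ℕ) (hm : 2 ≤ m) :
    Primitive (pw p m ++ q) := by
  have hp0 : 0 < p.length := length_pos_iff.mpr hp.1
  have hq0 : 0 < q.length := length_pos_iff.mpr hq.1
  have hqp : 2 * q.length ≤ p.length := hlen ▸ Nat.mul_le_mul_right _ hr
  refine ⟨append_ne_nil_of_right_ne_nil _ hq.1, fun v k hvk => ?_⟩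
  by_contra hk
  have hlenv : k * v.length = m * p.length + q.length := by
    simpa [length_pw] using congrArg length hvk.symm
  have hk2 : 2 ≤ k := by rcases Nat.eq_zero_or_pos k with rfl | _ <;> omega
  have hper : HasPeriod (pw p m) v.length :=
    (hasPeriod_pw v k).infix (hvk ▸ prefix_append _ _).isInfix
  rcases le_or_gt (p.length + v.length) (m * p.length) with hshort | hlong
  · have hdvd : p.length ∣ v.length := hp.length_dvd_of_hasPeriod_pw hper hshort
    have hdvd_q : p.length ∣ q.length :=
      (Nat.dvd_add_right (dvd_mul_left _ _)).mp (hlenv ▸ dvd_mul_of_dvd_right hdvd k)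
    exact absurd (Nat.le_of_dvd hq0 hdvd_q) (by omega)
  · obtain ⟨rfl, rfl⟩ : m = 2 ∧ k = 2 := by
      obtain ⟨m, rfl⟩ := Nat.exists_eq_add_of_le hm
      obtain ⟨k, rfl⟩ := Nat.exists_eq_add_of_le hk2
      constructor <;> nlinarith
    set t := v.length - p.length
    have hpt : HasPeriod p t := by
      simpa [pw] using (hasPeriod_pw p 2).drop_of_hasPeriod_add (k := t)
        (by rwa [Nat.sub_add_cancel (by omega)])
    have ht_dvd : t ∣ p.length := ⟨2 * r, by rw [hlen, show q.length = 2 * t by omega]; ring⟩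
    have ht_eq := hp.eq_length_of_hasPeriod (by omega) ht_dvd hpt
    omega

theorem chu_shyr_yu_ppow_q (p q : List A) (hp : Primitive p) (hq : Primitive q)
    (hpq : p ≠ q) (r : ℕ) (hr : 2 ≤ r) (hlen : p.length = r * q.length)
    (m : ℕ) (hm : 2 ≤ m) :
    Primitive (pw p m ++ q) :=
  chu_shyr_yu_ppow_q_general p q hp hq r hr hlen m hm
end

section
/- Let q be a primitive word of length 2m (m ≥ 1) and x any word of length m. Then the word x q x is primitive. -/
variable {A : Type*}

/-!
If `x ++ q ++ x = v ^ k` with `k ≥ 2`, this word of length `4m` has the period `|v|`, which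
divides `4m`, and the period `3m` coming from its border `x`. For `k ≥ 2` these are short enough
for the Fine–Wilf periodicity lemma, so `d = gcd |v| (3m)` is a period as well, and `d ∣ m`.
Then the factor `q` has period `d` and length `2m`, so it is the power of exponent `2m / d` of its
prefix of length `d`, an even exponent, contradicting primitivity.
-/

open List

lemma length_pw_s13 (v : List A) (k : ℕ) : (pw v k).length = k * v.length := by
  induction k with
  | zero => simp [pw]
  | succ k ih => simp only [pw, length_append, ih]; ring

lemma pw_prefix_pw_succ_s13 (v : List A) (k : ℕ) : pw v k <+: pw v (k + 1) := by
  induction k with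
  | zero => exact nil_prefix
  | succ k ih => exact (prefix_append_right_inj v).2 ih

lemma hasPeriod_pw_s13 (v : List A) (k : ℕ) : (pw v k).HasPeriod v.length := by
  cases k with
  | zero => exact hasPeriod_empty _
  | succ k =>
    show v ++ pw v k <+: take v.length (v ++ pw v k) ++ (v ++ pw v k)
    rw [take_left' rfl]
    exact (prefix_append_right_inj v).2 (pw_prefix_pw_succ_s13 v k)

lemma hasPeriod_append_append_self (x y : List A) :
    (x ++ y ++ x).HasPeriod (x ++ y).length := by
  show x ++ y ++ x <+: take (x ++ y).length (x ++ y ++ x) ++ (x ++ y ++ x)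
  rw [take_left' rfl]
  exact (prefix_append_right_inj _).2 ((prefix_append x y).trans (prefix_append _ x))

lemma List.HasPeriod.eq_pw {w : List A} {d : ℕ} (per : w.HasPeriod d) :
    ∀ {c : ℕ}, w.length = c * d → w = pw (w.take d) c
  | 0, h => length_eq_zero_iff.mp (by simpa using h)
  | c + 1, h => by
    have hlen : (drop d w).length = c * d := by rw [length_drop, h, Nat.succ_mul]; omega
    have hdrop : drop d w = pw (take d w) c := by
      rw [(per.infix (drop_suffix d w).isInfix).eq_pw hlen]
      rcases c with _ | c
      · rfl
      · rw [prefix_iff_eq_take.mp per.drop_prefix, take_take, hlen,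
          Nat.min_eq_left (Nat.le_mul_of_pos_left d c.succ_pos)]
    calc w = take d w ++ drop d w := (take_append_drop d w).symm
      _ = pw (take d w) (c + 1) := by rw [hdrop]; rfl

lemma add_three_mul_sub_gcd_le_four_mul {k p m : ℕ} (hk : 2 ≤ k) (h : k * p = 4 * m) :
    p + 3 * m - p.gcd (3 * m) ≤ 4 * m := by
  rcases (show k = 2 ∨ k = 3 ∨ 4 ≤ k by omega) with rfl | rfl | hk4
  · obtain rfl : p = 2 * m := by omega
    rw [Nat.gcd_mul_right]
    norm_num
    omega
  · obtain ⟨r, rfl⟩ : 3 ∣ m := by omega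
    obtain rfl : p = 4 * r := by omega
    rw [show 3 * (3 * r) = 9 * r by ring, Nat.gcd_mul_right]
    norm_num
    omega
  · have : 4 * p ≤ k * p := Nat.mul_le_mul_right p hk4
    omega

theorem xqx_primitive_general (q x : List A) (hq : Primitive q) (m : ℕ)
    (hql : q.length = 2 * m) (hxl : x.length = m) :
    Primitive (x ++ q ++ x) := by
  have hne : x ++ q ++ x ≠ [] := by simp [hq.1]
  refine ⟨hne, fun v k hvk => ?_⟩
  by_contra hk1
  have hk0 : k ≠ 0 := by rintro rfl; exact hne hvk
  have hlen : k * v.length = 4 * m := by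
    rw [← length_pw_s13, ← hvk, length_append, length_append, hql, hxl]; ring
  have hper_v : (x ++ q ++ x).HasPeriod v.length := hvk ▸ hasPeriod_pw_s13 v k
  have hper_xq : (x ++ q ++ x).HasPeriod (3 * m) := by
    simpa [hql, hxl, show m + 2 * m = 3 * m by ring] using hasPeriod_append_append_self x q
  have hper_d := hper_v.gcd hper_xq (by
    simpa [hql, hxl, show m + (2 * m + m) = 4 * m by ring] using
      add_three_mul_sub_gcd_le_four_mul (by omega) hlen)
  have hdm : v.length.gcd (3 * m) ∣ m := by
    refine (Nat.dvd_add_right (Nat.gcd_dvd_right _ _)).mp ?_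
    rw [show 3 * m + m = 4 * m by ring, ← hlen]
    exact (Nat.gcd_dvd_left _ _).mul_left k
  generalize v.length.gcd (3 * m) = d at hper_d hdm
  obtain ⟨e, rfl⟩ := hdm
  have hq_pw := (hper_d.infix (infix_append x q x)).eq_pw (c := 2 * e) (by rw [hql]; ring)
  have := hq.2 _ _ hq_pw
  omega

theorem xqx_primitive (q x : List A) (hq : Primitive q) (m : ℕ) (hm : 1 ≤ m)
    (hql : q.length = 2 * m) (hxl : x.length = m) :
    Primitive (x ++ q ++ x) :=
  xqx_primitive_general q x hq m hql hxl
end
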